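/- Let a, b, c be three distinct letters and let n ≥ 4, q = ⌊√n⌋. For all t₁, t₂ ∈ ℕ with t₂ ≤ q − 1 and q + t₁·q + t₂ + 1 = n, the partial word a^{q−1} b (⋄^{q−1} c)^{t₁} ⋄^{t₂} c of length n over the alphabet {a, b, c} is unbordered. -/

import Mathlib

/-- The domain of a partial word (a list over `Option A`, where `none` is the hole):
the set of positions carrying a letter. -/
def PartialWord.domain {A : Type*} (w : List (Option A)) : Finset ℕ :=
  (Finset.range w.length).filter fun i => (w.getD i none).isSome

/-- Two partial words are compatible if they have the same length and agree on the
intersection of their domains. -/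
def PartialWord.Compatible {A : Type*} (w v : List (Option A)) : Prop :=
  w.length = v.length ∧
    ∀ i ∈ PartialWord.domain w ∩ PartialWord.domain v, w.getD i none = v.getD i none

/-- A partial word is unbordered if no nonempty proper prefix is compatible with a
suffix of the same length. -/
def PartialWord.Unbordered {A : Type*} (w : List (Option A)) : Prop :=
  ∀ x y : List (Option A), x <+: w → y <:+ w → x ≠ [] → x.length < w.length →
    x.length = y.length → ¬ PartialWord.Compatible x y

/-- The number of holes of a partial word. -/
def PartialWord.holes {A : Type*} (w : List (Option A)) : ℕ :=
  w.countP fun x => x.isNone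

/-- `u` repeated `t` times. -/
def listPow {α : Type*} (u : List α) (t : ℕ) : List α := (List.replicate t u).flatten

/-- A complete sparse ruler of length `n`. -/
def IsCompleteRuler (n : ℕ) (R : Finset ℕ) : Prop :=
  (∀ x ∈ R, x ≤ n) ∧ 0 ∈ R ∧ n ∈ R ∧ ∀ d ≤ n, ∃ r ∈ R, ∃ s ∈ R, r = s + d

/-- Minimum number of marks of a complete sparse ruler of length `n`. -/
noncomputable def M1 (n : ℕ) : ℕ :=
  sInf {k | ∃ R : Finset ℕ, IsCompleteRuler n R ∧ R.card = k}

/-- Maximum number of holes an unbordered partial word of length `n` over an alphabet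
of size `k` can have. -/
noncomputable def HB (k n : ℕ) : ℕ :=
  sSup {h | ∃ w : List (Option (Fin k)),
    w.length = n ∧ PartialWord.Unbordered w ∧ PartialWord.holes w = h}

/-- The ruler (set of partial sums) given by a difference representation. -/
def rulerOfDiffs (D : List ℕ) : Finset ℕ :=
  ((List.range (D.length + 1)).map fun t => (D.take t).sum).toFinset

/-- The difference representation of the extended Wichmann ruler `w₁(r,s,i,j)`. -/
def wichmannDiffs (r s i j : ℕ) : List ℕ :=
  List.replicate r 1 ++ [r + 1] ++ List.replicate r (2 * r + 1) ++
    List.replicate s (4 * r + 3) ++ List.replicate (r + 1) (2 * r + 2) ++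
    List.replicate r 1 ++ List.replicate i (r + 1) ++ [j]

/-- A complete two-dimensional sparse ruler: an `(n,m)`-ruler. -/
def IsRuler2 (n m : ℕ) (R : Finset (ℕ × ℕ)) : Prop :=
  (∀ p ∈ R, p.1 < n ∧ p.2 < m) ∧
    ∀ x y : ℤ, |x| ≤ (n : ℤ) - 1 → |y| ≤ (m : ℤ) - 1 →
      ∃ p ∈ R, ∃ q ∈ R, (p.1 : ℤ) - (q.1 : ℤ) = x ∧ (p.2 : ℤ) - (q.2 : ℤ) = y

/-- Minimum number of marks of an `(n,m)`-ruler. -/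
noncomputable def M2 (n m : ℕ) : ℕ :=
  sInf {k | ∃ R : Finset (ℕ × ℕ), IsRuler2 n m R ∧ R.card = k}

/-- The domain of an `n` by `m` two-dimensional partial word. -/
def domain2 {A : Type*} (n m : ℕ) (w : ℕ × ℕ → Option A) : Finset (ℕ × ℕ) :=
  (Finset.range n ×ˢ Finset.range m).filter fun p => (w p).isSome

/-- An `n` by `m` two-dimensional partial word is unbordered if its domain is an
`(n,m)`-ruler and every nonzero measurable vector can be measured between two
positions carrying distinct letters. -/
def Unbordered2 {A : Type*} (n m : ℕ) (w : ℕ × ℕ → Option A) : Prop :=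
  IsRuler2 n m (domain2 n m w) ∧
    ∀ x y : ℤ, |x| ≤ (n : ℤ) - 1 → |y| ≤ (m : ℤ) - 1 → ¬(x = 0 ∧ y = 0) →
      ∃ p ∈ domain2 n m w, ∃ q ∈ domain2 n m w,
        (p.1 : ℤ) - (q.1 : ℤ) = x ∧ (p.2 : ℤ) - (q.2 : ℤ) = y ∧ w p ≠ w q

/-- Number of holes of an `n` by `m` two-dimensional partial word. -/
def holes2 {A : Type*} (n m : ℕ) (w : ℕ × ℕ → Option A) : ℕ :=
  n * m - (domain2 n m w).card

/-- Maximum number of holes an unbordered `n` by `m` two-dimensional partial word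
over an alphabet of size `k` can have. -/
noncomputable def HB2 (k n m : ℕ) : ℕ :=
  sSup {h | ∃ w : ℕ × ℕ → Option (Fin k), Unbordered2 n m w ∧ holes2 n m w = h}

/-!
A border of length `ℓ` compares each position `i < ℓ` with position `i + s`, where
`s = n - ℓ`, so it suffices to exhibit, for every shift `0 < s < n`, two letters at distance
`s` that differ. For `s < q` the letters `a` at `q - 1 - s` and `b` at `q - 1` do. For `s ≥ q`,
the `c`'s of `(⋄^{q-1} c)^{t₁} ⋄^{t₂} c` are at most `q` apart (as `t₂ < q`), so some `c`
lies at distance `s` behind one of the first `q` positions, all of which carry `a` or `b`.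
-/

namespace PartialWord

variable {A : Type*}

theorem mem_domain_iff {w : List (Option A)} {i : ℕ} :
    i ∈ domain w ↔ (w.getD i none).isSome := by
  simp only [domain, Finset.mem_filter, Finset.mem_range, and_iff_right_iff_imp]
  intro h
  by_contra hi
  rw [List.getD_eq_default _ _ (by omega)] at h
  simp at h

theorem unbordered_of_forall_shift (w : List (Option A))
    (h : ∀ s, 0 < s → s < w.length →
      ∃ i x y, w.getD i none = some x ∧ w.getD (i + s) none = some y ∧ x ≠ y) :
    Unbordered w := by
  rintro u v hu hv hne hlt huv ⟨-, hagree⟩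
  obtain ⟨i, x, y, hx, hy, hxy⟩ := h (w.length - u.length) (by omega)
    (by have := List.length_pos_iff.mpr hne; omega)
  have hi : i < u.length := by
    by_contra hi
    rw [List.getD_eq_default _ _ (by omega)] at hy
    simp at hy
  rw [List.prefix_iff_eq_take.mp hu] at hagree
  rw [List.suffix_iff_eq_drop.mp hv, ← huv] at hagree
  have hu' : (List.take u.length w).getD i none = some x := by
    simpa [List.getD_eq_getElem?_getD, hi] using hx
  have hv' : (List.drop (w.length - u.length) w).getD i none = some y := by
    simpa [List.getD_eq_getElem?_getD, Nat.add_comm] using hy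
  have := hagree i (Finset.mem_inter.mpr ⟨mem_domain_iff.mpr (by rw [hu']; rfl),
    mem_domain_iff.mpr (by rw [hv']; rfl)⟩)
  rw [hu', hv'] at this
  exact hxy (Option.some.inj this)

end PartialWord

theorem listPow_succ {α : Type*} (u : List α) (t : ℕ) : listPow u (t + 1) = u ++ listPow u t :=
  rfl

theorem exists_getD_listPow_append_eq_last {α : Type*} (v r : List α) (x d : α)
    (hr : r.length ≤ v.length) (t j : ℕ)
    (hj : j < (listPow (v ++ [x]) t ++ (r ++ [x])).length) :
    ∃ p, j ≤ p ∧ p ≤ j + v.length ∧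
      (listPow (v ++ [x]) t ++ (r ++ [x])).getD p d = x := by
  induction t generalizing j with
  | zero =>
    refine ⟨r.length, ?_, by omega, by simp [listPow]⟩
    simp only [listPow, List.replicate_zero, List.flatten_nil, List.nil_append,
      List.length_append, List.length_singleton] at hj
    omega
  | succ t ih =>
    rw [listPow_succ, List.append_assoc] at hj ⊢
    by_cases hjv : j ≤ v.length
    · exact ⟨v.length, hjv, by omega, by simp⟩
    · obtain ⟨p, hjp, hpj, hp⟩ := ih (j - (v.length + 1))
        (by simp only [List.length_append, List.length_singleton] at hj ⊢; omega)
      refine ⟨p + (v.length + 1), by omega, by omega, ?_⟩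
      rw [List.getD_append_right _ _ _ _ (by simp)]
      simpa using hp

theorem getD_replicate_append_singleton {α : Type*} (x y d : α) (k i : ℕ) (hi : i ≤ k) :
    (List.replicate k x ++ [y]).getD i d = if i < k then x else y := by
  split_ifs with h
  · rw [List.getD_append _ _ _ _ (by simpa using h)]; simp [h]
  · rw [List.getD_append_right _ _ _ _ (by rw [List.length_replicate]; omega),
      List.length_replicate, show i - k = 0 by omega]
    rfl

theorem unbordered_replicate_append_listPow {A : Type*} (a b c : A) (hab : a ≠ b) (hac : a ≠ c)
    (hbc : b ≠ c) (q t₁ t₂ : ℕ) (ht₂ : t₂ < q) :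
    PartialWord.Unbordered
      ((List.replicate (q - 1) (some a) ++ [some b] ++
        listPow (List.replicate (q - 1) none ++ [some c]) t₁ ++
        List.replicate t₂ none ++ [some c] : List (Option A))) := by
  set P : List (Option A) := List.replicate (q - 1) (some a) ++ [some b]
  set B : List (Option A) := listPow (List.replicate (q - 1) none ++ [some c]) t₁ ++
    (List.replicate t₂ none ++ [some c])
  rw [show P ++ _ ++ _ ++ [some c] = P ++ B by simp only [B, List.append_assoc]]
  have hP_len : P.length = q := by
    simp only [P, List.length_append, List.length_replicate, List.length_singleton]; omega
  have hW_P (i : ℕ) (hi : i < q) : (P ++ B).getD i none = some (if i < q - 1 then a else b) := by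
    rw [List.getD_append _ _ _ _ (by omega), getD_replicate_append_singleton _ _ _ _ _ (by omega)]
    split_ifs <;> rfl
  have hW_B (p : ℕ) : (P ++ B).getD (q + p) none = B.getD p none := by
    rw [List.getD_append_right _ _ _ _ (by omega), hP_len, Nat.add_sub_cancel_left]
  apply PartialWord.unbordered_of_forall_shift
  intro s hs hsW
  rcases Nat.lt_or_ge s q with hsq | hqs
  · refine ⟨q - 1 - s, a, b, ?_, ?_, hab⟩
    · rw [hW_P _ (by omega), if_pos (by omega)]
    · rw [show q - 1 - s + s = q - 1 by omega, hW_P _ (by omega), if_neg (by omega)]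
  · obtain ⟨p, hsp, hps, hp⟩ := exists_getD_listPow_append_eq_last
      (List.replicate (q - 1) none) (List.replicate t₂ none) (some c) none
      (by simp only [List.length_replicate]; omega) t₁
      (s - q) (show s - q < B.length by simp only [List.length_append, hP_len] at hsW; omega)
    simp only [List.length_replicate] at hps
    refine ⟨p - (s - q), _, c, hW_P _ (by omega), ?_, ?_⟩
    · rw [show p - (s - q) + s = q + p by omega, hW_B, hp]
    · split_ifs
      exacts [hac, hbc]

theorem sqrtWord_unbordered_general {A : Type*} (a b c : A) (hab : a ≠ b) (hac : a ≠ c)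
    (hbc : b ≠ c) (n : ℕ) (t₁ t₂ : ℕ) (ht₂ : t₂ ≤ Nat.sqrt n - 1)
    (hlen : Nat.sqrt n + t₁ * Nat.sqrt n + t₂ + 1 = n) :
    PartialWord.Unbordered
      ((List.replicate (Nat.sqrt n - 1) (some a) ++ [some b] ++
        listPow (List.replicate (Nat.sqrt n - 1) none ++ [some c]) t₁ ++
        List.replicate t₂ none ++ [some c] : List (Option A))) := by
  have hq : 0 < Nat.sqrt n := Nat.sqrt_pos.mpr (by omega : 0 < n)
  exact unbordered_replicate_append_listPow a b c hab hac hbc _ t₁ t₂ (by omega)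

/-- For three distinct letters `a, b, c`, `n ≥ 4`, `q = ⌊√n⌋`, and all
`t₁, t₂ ∈ ℕ` with `t₂ ≤ q - 1` and `q + t₁·q + t₂ + 1 = n`, the partial word
`a^{q-1} b (⋄^{q-1} c)^{t₁} ⋄^{t₂} c` of length `n` over the alphabet `{a,b,c}` is
unbordered. -/
theorem sqrtWord_unbordered {A : Type*} (a b c : A) (hab : a ≠ b) (hac : a ≠ c)
    (hbc : b ≠ c) (n : ℕ) (hn : 4 ≤ n) (t₁ t₂ : ℕ) (ht₂ : t₂ ≤ Nat.sqrt n - 1)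
    (hlen : Nat.sqrt n + t₁ * Nat.sqrt n + t₂ + 1 = n) :
    PartialWord.Unbordered
      ((List.replicate (Nat.sqrt n - 1) (some a) ++ [some b] ++
        listPow (List.replicate (Nat.sqrt n - 1) none ++ [some c]) t₁ ++
        List.replicate t₂ none ++ [some c] : List (Option A))) :=
  sqrtWord_unbordered_general a b c hab hac hbc n t₁ t₂ ht₂ hlen
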